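/- Let R be a linear operator on R^p with ‖Rz‖ ≤ ‖z‖ and ‖(R − I)z‖² ≥ r‖z‖² for all z, for some r > 0, and let P be a linear map with operator norm at most 1. Then for every α ∈ (0,1) and every z̃ ∈ R^p, m̃ ∈ R^q, it holds that ‖(1−α)z̃ + αRz̃ + αPm̃‖² − ‖z̃‖² ≤ −α(1−α)r‖z̃‖² + 2α‖z̃‖‖m̃‖ + α²‖m̃‖². -/

import Mathlib

/-!
Write `v = (1 - α) z + α R z`. The parallelogram-type identity
`‖(1 - α) x + α y‖² = (1 - α)‖x‖² + α‖y‖² - α(1 - α)‖y - x‖²`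
together with `‖R z‖ ≤ ‖z‖` and the residual bound gives `‖v‖² ≤ (1 - α(1 - α) r)‖z‖²`, and in
particular `‖v‖ ≤ ‖z‖`. Adding the perturbation `α P m`, of norm at most `α‖m‖`, costs at most
`2α‖z‖‖m‖ + α²‖m‖²` by the triangle inequality.
-/

section InnerProductSpace

variable {E : Type*} [NormedAddCommGroup E] [InnerProductSpace ℝ E]

theorem norm_sub_smul_add_smul_sq (a : ℝ) (x y : E) :
    ‖(1 - a) • x + a • y‖ ^ 2
      = (1 - a) * ‖x‖ ^ 2 + a * ‖y‖ ^ 2 - a * (1 - a) * ‖y - x‖ ^ 2 := by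
  simp only [← real_inner_self_eq_norm_sq, inner_add_left, inner_add_right, inner_sub_left,
    inner_sub_right, real_inner_smul_left, real_inner_smul_right, real_inner_comm x y]
  ring

theorem norm_sub_smul_add_smul_sq_le {a r : ℝ} {x y : E} (ha₀ : 0 ≤ a) (ha₁ : a ≤ 1)
    (hyx : ‖y‖ ≤ ‖x‖) (hres : r * ‖x‖ ^ 2 ≤ ‖y - x‖ ^ 2) :
    ‖(1 - a) • x + a • y‖ ^ 2 ≤ (1 - a * (1 - a) * r) * ‖x‖ ^ 2 := by
  have hsq : ‖y‖ ^ 2 ≤ ‖x‖ ^ 2 := pow_le_pow_left₀ (norm_nonneg y) hyx 2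
  have hweight : 0 ≤ a * (1 - a) := mul_nonneg ha₀ (sub_nonneg.mpr ha₁)
  rw [norm_sub_smul_add_smul_sq]
  nlinarith [mul_le_mul_of_nonneg_left hres hweight, mul_le_mul_of_nonneg_left hsq ha₀]

theorem norm_sub_smul_add_smul_le {a : ℝ} {x y : E} (ha₀ : 0 ≤ a) (ha₁ : a ≤ 1)
    (hyx : ‖y‖ ≤ ‖x‖) : ‖(1 - a) • x + a • y‖ ≤ ‖x‖ := by
  have h := norm_sub_smul_add_smul_sq_le (r := 0) ha₀ ha₁ hyx (by simp)
  rw [mul_zero, sub_zero, one_mul] at h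
  exact (pow_le_pow_iff_left₀ (norm_nonneg _) (norm_nonneg x) two_ne_zero).mp h

end InnerProductSpace

theorem norm_add_sq_le_of_norm_le {E : Type*} [SeminormedAddCommGroup E] {u w x : E} {b : ℝ}
    (hux : ‖u‖ ≤ ‖x‖) (hw : ‖w‖ ≤ b) :
    ‖u + w‖ ^ 2 ≤ ‖u‖ ^ 2 + 2 * ‖x‖ * b + b ^ 2 := by
  have hb : 0 ≤ b := (norm_nonneg w).trans hw
  calc ‖u + w‖ ^ 2 ≤ (‖u‖ + b) ^ 2 :=
        pow_le_pow_left₀ (norm_nonneg _) ((norm_add_le u w).trans (by gcongr)) 2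
    _ = ‖u‖ ^ 2 + 2 * ‖u‖ * b + b ^ 2 := by ring
    _ ≤ ‖u‖ ^ 2 + 2 * ‖x‖ * b + b ^ 2 := by gcongr

theorem stmt_5_general {p q : ℕ}
    (R : EuclideanSpace ℝ (Fin p) →ₗ[ℝ] EuclideanSpace ℝ (Fin p))
    (P : EuclideanSpace ℝ (Fin q) →ₗ[ℝ] EuclideanSpace ℝ (Fin p))
    (r : ℝ)
    (hRnonexp : ∀ z, ‖R z‖ ≤ ‖z‖)
    (hRres : ∀ z, r * ‖z‖ ^ 2 ≤ ‖R z - z‖ ^ 2)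
    (hP : ∀ m, ‖P m‖ ≤ ‖m‖) :
    ∀ (α : ℝ), α ∈ Set.Ioo (0 : ℝ) 1 →
      ∀ (z : EuclideanSpace ℝ (Fin p)) (m : EuclideanSpace ℝ (Fin q)),
        ‖(1 - α) • z + α • R z + α • P m‖ ^ 2 - ‖z‖ ^ 2
          ≤ -(α * (1 - α) * r * ‖z‖ ^ 2) + 2 * α * ‖z‖ * ‖m‖ + α ^ 2 * ‖m‖ ^ 2 := by
  rintro α ⟨hα₀, hα₁⟩ z m
  have hv := norm_sub_smul_add_smul_sq_le hα₀.le hα₁.le (hRnonexp z) (hRres z)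
  have hw : ‖α • P m‖ ≤ α * ‖m‖ := by
    rw [norm_smul, Real.norm_of_nonneg hα₀.le]
    exact mul_le_mul_of_nonneg_left (hP m) hα₀.le
  have hsum := norm_add_sq_le_of_norm_le
    (norm_sub_smul_add_smul_le hα₀.le hα₁.le (hRnonexp z)) hw
  linarith

/-- Boundary-layer increment bound (eq. `increment_pz`): if `R` is nonexpansive with
`‖(R−I)z‖² ≥ r‖z‖²` and `‖P‖ ≤ 1`, then for `α ∈ (0,1)`,
`‖(1−α)z̃ + αRz̃ + αPm̃‖² − ‖z̃‖² ≤ −α(1−α)r‖z̃‖² + 2α‖z̃‖‖m̃‖ + α²‖m̃‖²`. -/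
theorem stmt_5 {p q : ℕ}
    (R : EuclideanSpace ℝ (Fin p) →ₗ[ℝ] EuclideanSpace ℝ (Fin p))
    (P : EuclideanSpace ℝ (Fin q) →ₗ[ℝ] EuclideanSpace ℝ (Fin p))
    (r : ℝ) (hr : 0 < r)
    (hRnonexp : ∀ z, ‖R z‖ ≤ ‖z‖)
    (hRres : ∀ z, r * ‖z‖ ^ 2 ≤ ‖R z - z‖ ^ 2)
    (hP : ∀ m, ‖P m‖ ≤ ‖m‖) :
    ∀ (α : ℝ), α ∈ Set.Ioo (0 : ℝ) 1 →
      ∀ (z : EuclideanSpace ℝ (Fin p)) (m : EuclideanSpace ℝ (Fin q)),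
        ‖(1 - α) • z + α • R z + α • P m‖ ^ 2 - ‖z‖ ^ 2
          ≤ -(α * (1 - α) * r * ‖z‖ ^ 2) + 2 * α * ‖z‖ * ‖m‖ + α ^ 2 * ‖m‖ ^ 2 :=
  stmt_5_general R P r hRnonexp hRres hP
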